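/- Under the SAEF-SGD-with-momentum dynamics with learning rates 0 < η_t ≤ η_max, for every β₁ with 0 < β₁ < δ/(1−δ) and every t ≥ 0: (1/K)Σ_{k=1}^K E‖(1/K)Σ_{j=1}^K e^j_t − e^k_t‖² ≤ ((K−1)/K) · [(1−δ)(1 + 1/β₁)/(1 − (1−δ)(1+β₁))] · η_max²(M² + σ²)/(1−μ)². -/

import Mathlib

open MeasureTheory ProbabilityTheory Finset

/-! Write `G = M² + σ²`. Since `m_{t+1} = μ m_t + g_t` is a convex combination of `m_t` and
`g_t / (1 - μ)`, the second moment of the momentum satisfies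
`E‖m_{t+1}‖² ≤ μ E‖m_t‖² + G / (1 - μ)` and stays below `G / (1 - μ)²`. The compressor
contracts, so Young's inequality with parameter `β₁` gives
`E‖e_{t+1}‖² ≤ (1 - δ)(1 + β₁) E‖e_t‖² + (1 - δ)(1 + 1/β₁) η_max² G / (1 - μ)²`, a recursion
whose fixed point is the bound on `E‖e_t‖²`. Finally, the empirical mean `ē` of the errors
satisfies `Σ_k ‖ē - e_k‖² = Σ_k ‖e_k‖² - K⁻¹ ‖Σ_k e_k‖²`, and by independence the cross terms
`E⟪e_j, e_l⟫` equal `‖E e‖² ≥ 0`, so `E‖Σ_k e_k‖² ≥ Σ_k E‖e_k‖²`. -/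

theorem norm_add_sq_le_one_add_mul {E : Type*} [SeminormedAddCommGroup E] (x y : E) {β : ℝ}
    (hβ : 0 < β) : ‖x + y‖ ^ 2 ≤ (1 + β) * ‖x‖ ^ 2 + (1 + 1 / β) * ‖y‖ ^ 2 := by
  have htri : ‖x + y‖ ^ 2 ≤ (‖x‖ + ‖y‖) ^ 2 := by gcongr; exact norm_add_le x y
  have hgap : (1 + β) * ‖x‖ ^ 2 + (1 + 1 / β) * ‖y‖ ^ 2 - (‖x‖ + ‖y‖) ^ 2
      = (β * ‖x‖ - ‖y‖) ^ 2 / β := by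
    field_simp
    ring
  have : 0 ≤ (β * ‖x‖ - ‖y‖) ^ 2 / β := by positivity
  linarith

theorem norm_smul_add_sq_le {E : Type*} [SeminormedAddCommGroup E] [NormedSpace ℝ E]
    (x y : E) {μ : ℝ} (hμ0 : 0 ≤ μ) (hμ1 : μ < 1) :
    ‖μ • x + y‖ ^ 2 ≤ μ * ‖x‖ ^ 2 + (1 - μ)⁻¹ * ‖y‖ ^ 2 := by
  have htri : ‖μ • x + y‖ ^ 2 ≤ (μ * ‖x‖ + ‖y‖) ^ 2 := by
    gcongr
    simpa [norm_smul, abs_of_nonneg hμ0] using norm_add_le (μ • x) y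
  have h1μ : 0 < 1 - μ := by linarith
  -- convexity of the square, applied to `μ ‖x‖ + (1 - μ) (‖y‖ / (1 - μ))`
  have hgap : μ * ‖x‖ ^ 2 + (1 - μ)⁻¹ * ‖y‖ ^ 2 - (μ * ‖x‖ + ‖y‖) ^ 2
      = μ * ((1 - μ) * ‖x‖ - ‖y‖) ^ 2 / (1 - μ) := by
    field_simp
    ring
  have : 0 ≤ μ * ((1 - μ) * ‖x‖ - ‖y‖) ^ 2 / (1 - μ) := by positivity
  linarith

theorem le_div_one_sub_of_le_mul_add {x : ℕ → ℝ} {r c : ℝ} (hr0 : 0 ≤ r) (hr1 : r < 1)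
    (h0 : x 0 ≤ c / (1 - r)) (hstep : ∀ t, x (t + 1) ≤ r * x t + c) (t : ℕ) :
    x t ≤ c / (1 - r) := by
  induction t with
  | zero => exact h0
  | succ t ih =>
    have : 1 - r ≠ 0 := by linarith
    calc x (t + 1) ≤ r * x t + c := hstep t
      _ ≤ r * (c / (1 - r)) + c := by gcongr
      _ = c / (1 - r) := by field_simp; ring

section SecondMoments

variable {Ω E : Type*} [MeasurableSpace Ω] {P : Measure Ω} [NormedAddCommGroup E]

theorem integral_norm_sq_le_of_le {f g h : Ω → E} (hg : MemLp g 2 P) (hh : MemLp h 2 P)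
    {a b : ℝ} (hfgh : ∀ ω, ‖f ω‖ ^ 2 ≤ a * ‖g ω‖ ^ 2 + b * ‖h ω‖ ^ 2) :
    ∫ ω, ‖f ω‖ ^ 2 ∂P ≤ a * ∫ ω, ‖g ω‖ ^ 2 ∂P + b * ∫ ω, ‖h ω‖ ^ 2 ∂P := by
  have hg2 := (hg.integrable_norm_pow two_ne_zero).const_mul a
  have hh2 := (hh.integrable_norm_pow two_ne_zero).const_mul b
  rw [← integral_const_mul, ← integral_const_mul, ← integral_add hg2 hh2]
  exact integral_mono_of_nonneg (.of_forall fun ω => by positivity) (hg2.add hh2)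
    (.of_forall hfgh)

variable [NormedSpace ℝ E]

theorem memLp_momentum {μ : ℝ} {g m : ℕ → Ω → E} (hg : ∀ t, MemLp (g t) 2 P)
    (hm0 : ∀ ω, m 0 ω = 0) (hm : ∀ t ω, m (t + 1) ω = μ • m t ω + g t ω) (t : ℕ) :
    MemLp (m t) 2 P := by
  induction t with
  | zero => simp [funext hm0]
  | succ t ih =>
    rw [show m (t + 1) = μ • m t + g t from funext (hm t)]
    exact (ih.const_smul μ).add (hg t)

theorem integral_norm_sq_momentum_le {μ G : ℝ} {g m : ℕ → Ω → E} (hμ0 : 0 ≤ μ) (hμ1 : μ < 1)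
    (hg : ∀ t, MemLp (g t) 2 P) (hgG : ∀ t, ∫ ω, ‖g t ω‖ ^ 2 ∂P ≤ G)
    (hm0 : ∀ ω, m 0 ω = 0) (hm : ∀ t ω, m (t + 1) ω = μ • m t ω + g t ω) (t : ℕ) :
    ∫ ω, ‖m t ω‖ ^ 2 ∂P ≤ G / (1 - μ) ^ 2 := by
  have hG : 0 ≤ G := (integral_nonneg fun _ => by positivity).trans (hgG 0)
  have hμ : 1 - μ ≠ 0 := by linarith
  have hfix : G / (1 - μ) ^ 2 = (1 - μ)⁻¹ * G / (1 - μ) := by field_simp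
  rw [hfix]
  refine le_div_one_sub_of_le_mul_add (x := fun t => ∫ ω, ‖m t ω‖ ^ 2 ∂P) hμ0 hμ1
    ?_ (fun t => ?_) t
  · have : 0 ≤ (1 - μ)⁻¹ := inv_nonneg.mpr (by linarith)
    simp only [hm0, norm_zero, zero_pow two_ne_zero, integral_zero]
    positivity
  · calc ∫ ω, ‖m (t + 1) ω‖ ^ 2 ∂P
        ≤ μ * ∫ ω, ‖m t ω‖ ^ 2 ∂P + (1 - μ)⁻¹ * ∫ ω, ‖g t ω‖ ^ 2 ∂P :=
          integral_norm_sq_le_of_le (memLp_momentum hg hm0 hm t) (hg t) fun ω => by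
            rw [hm]; exact norm_smul_add_sq_le _ _ hμ0 hμ1
      _ ≤ μ * ∫ ω, ‖m t ω‖ ^ 2 ∂P + (1 - μ)⁻¹ * G := by
          have : 0 ≤ (1 - μ)⁻¹ := inv_nonneg.mpr (by linarith)
          gcongr
          exact hgG t

theorem memLp_errorFeedback {q : ℝ} {η : ℕ → ℝ} {e m : ℕ → Ω → E} (hq : q ≤ 1)
    (hm : ∀ t, MemLp (m t) 2 P) (he_meas : ∀ t, AEStronglyMeasurable (e t) P)
    (he0 : ∀ ω, e 0 ω = 0)
    (hcontr : ∀ t ω, ‖e (t + 1) ω‖ ^ 2 ≤ q * ‖e t ω + η t • m (t + 1) ω‖ ^ 2) (t : ℕ) :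
    MemLp (e t) 2 P := by
  induction t with
  | zero => simp [funext he0]
  | succ t ih =>
    refine (ih.add ((hm (t + 1)).const_smul (η t))).of_le (he_meas (t + 1))
      (.of_forall fun ω => ?_)
    have hq' : q * ‖e t ω + η t • m (t + 1) ω‖ ^ 2 ≤ ‖e t ω + η t • m (t + 1) ω‖ ^ 2 :=
      mul_le_of_le_one_left (by positivity) hq
    exact (pow_le_pow_iff_left₀ (norm_nonneg _) (norm_nonneg _) two_ne_zero).mp
      ((hcontr t ω).trans hq')

theorem integral_norm_sq_errorFeedback_le {q β ηmax B : ℝ} {η : ℕ → ℝ} {e m : ℕ → Ω → E}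
    (hq0 : 0 ≤ q) (hβ : 0 < β) (hqβ : q * (1 + β) < 1) (hη : ∀ t, η t ^ 2 ≤ ηmax ^ 2)
    (hm : ∀ t, MemLp (m t) 2 P) (hmB : ∀ t, ∫ ω, ‖m (t + 1) ω‖ ^ 2 ∂P ≤ B)
    (he : ∀ t, MemLp (e t) 2 P) (he0 : ∀ ω, e 0 ω = 0)
    (hcontr : ∀ t ω, ‖e (t + 1) ω‖ ^ 2 ≤ q * ‖e t ω + η t • m (t + 1) ω‖ ^ 2) (t : ℕ) :
    ∫ ω, ‖e t ω‖ ^ 2 ∂P ≤ q * (1 + 1 / β) / (1 - q * (1 + β)) * (ηmax ^ 2 * B) := by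
  have hB : 0 ≤ B := (integral_nonneg fun _ => by positivity).trans (hmB 0)
  have hfix : q * (1 + 1 / β) / (1 - q * (1 + β)) * (ηmax ^ 2 * B)
      = q * (1 + 1 / β) * (ηmax ^ 2 * B) / (1 - q * (1 + β)) := by ring
  rw [hfix]
  refine le_div_one_sub_of_le_mul_add (x := fun t => ∫ ω, ‖e t ω‖ ^ 2 ∂P) (by positivity) hqβ
    ?_ (fun t => ?_) t
  · have : 0 < 1 - q * (1 + β) := by linarith
    simp only [he0, norm_zero, zero_pow two_ne_zero, integral_zero]
    positivity
  · have hpt : ∀ ω, ‖e (t + 1) ω‖ ^ 2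
        ≤ q * (1 + β) * ‖e t ω‖ ^ 2 + q * (1 + 1 / β) * η t ^ 2 * ‖m (t + 1) ω‖ ^ 2 := by
      intro ω
      have hyoung := norm_add_sq_le_one_add_mul (e t ω) (η t • m (t + 1) ω) hβ
      rw [norm_smul, mul_pow, Real.norm_eq_abs, sq_abs] at hyoung
      linarith [hcontr t ω, mul_le_mul_of_nonneg_left hyoung hq0]
    calc ∫ ω, ‖e (t + 1) ω‖ ^ 2 ∂P
        ≤ q * (1 + β) * ∫ ω, ‖e t ω‖ ^ 2 ∂P
          + q * (1 + 1 / β) * η t ^ 2 * ∫ ω, ‖m (t + 1) ω‖ ^ 2 ∂P :=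
          integral_norm_sq_le_of_le (he t) (hm (t + 1)) hpt
      _ ≤ q * (1 + β) * ∫ ω, ‖e t ω‖ ^ 2 ∂P + q * (1 + 1 / β) * ηmax ^ 2 * B := by
          rw [mul_assoc (q * (1 + 1 / β)), mul_assoc (q * (1 + 1 / β))]
          gcongr q * (1 + β) * _ + q * (1 + 1 / β) * ?_
          exact mul_le_mul (hη t) (hmB t) (integral_nonneg fun _ => by positivity)
            (sq_nonneg _)
      _ = _ := by ring

end SecondMoments

section Deviation

variable {Ω E : Type*} [MeasurableSpace Ω] {P : Measure Ω} [NormedAddCommGroup E]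
  [InnerProductSpace ℝ E]

theorem sum_norm_inv_card_smul_sum_sub_sq {ι : Type*} [Fintype ι] (v : ι → E) :
    ∑ k, ‖(Fintype.card ι : ℝ)⁻¹ • ∑ j, v j - v k‖ ^ 2
      = ∑ k, ‖v k‖ ^ 2 - (Fintype.card ι : ℝ)⁻¹ * ‖∑ j, v j‖ ^ 2 := by
  set n : ℝ := (Fintype.card ι : ℝ)
  set S := ∑ j, v j
  have hcross : ∑ k, inner ℝ (n⁻¹ • S) (v k) = n⁻¹ * ‖S‖ ^ 2 := by
    rw [← inner_sum, real_inner_smul_left, real_inner_self_eq_norm_sq]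
  simp_rw [norm_sub_sq_real, sum_add_distrib, sum_sub_distrib, ← mul_sum, hcross, sum_const,
    card_univ, nsmul_eq_mul, norm_smul, mul_pow, Real.norm_eq_abs, sq_abs]
  have hn : n * n⁻¹ ^ 2 = n⁻¹ := by
    rw [sq, ← mul_assoc]
    simpa using inv_mul_mul_self n⁻¹
  change n * _ - _ + _ = _
  linear_combination ‖S‖ ^ 2 * hn

variable [CompleteSpace E] [MeasurableSpace E] [BorelSpace E]

theorem ProbabilityTheory.IndepFun.integral_inner {X Y : Ω → E} (hXY : IndepFun X Y P)
    (hX : Integrable X P) (hY : Integrable Y P) :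
    ∫ ω, inner ℝ (X ω) (Y ω) ∂P = inner ℝ (∫ ω, X ω ∂P) (∫ ω, Y ω ∂P) :=
  hXY.integral_bilin hX hY (innerSL ℝ)

theorem sum_integral_norm_sq_le_integral_norm_sum_sq [IsFiniteMeasure P] {ι : Type*}
    [Fintype ι] {X : ι → Ω → E} {m : E} (hX : ∀ i, MemLp (X i) 2 P)
    (hindep : Pairwise fun i j => IndepFun (X i) (X j) P) (hmean : ∀ i, ∫ ω, X i ω ∂P = m) :
    ∑ i, ∫ ω, ‖X i ω‖ ^ 2 ∂P ≤ ∫ ω, ‖∑ i, X i ω‖ ^ 2 ∂P := by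
  have hinner : ∀ i j, Integrable (fun ω => inner ℝ (X i ω) (X j ω)) P
      ∧ 0 ≤ ∫ ω, inner ℝ (X i ω) (X j ω) ∂P := by
    intro i j
    rcases eq_or_ne i j with rfl | hij
    · simp_rw [real_inner_self_eq_norm_sq]
      exact ⟨(hX i).integrable_norm_pow two_ne_zero, integral_nonneg fun _ => by positivity⟩
    · have hX1 k : Integrable (X k) P := (hX k).integrable one_le_two
      refine ⟨(hindep hij).integrable_bilin (hX1 i) (hX1 j) (innerSL ℝ), ?_⟩
      rw [(hindep hij).integral_inner (hX1 i) (hX1 j), hmean, hmean]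
      exact real_inner_self_nonneg
  have hexpand : ∀ ω, ‖∑ i, X i ω‖ ^ 2 = ∑ i, ∑ j, inner ℝ (X i ω) (X j ω) := fun ω => by
    simp_rw [← real_inner_self_eq_norm_sq, sum_inner, inner_sum]
  calc ∑ i, ∫ ω, ‖X i ω‖ ^ 2 ∂P = ∑ i, ∫ ω, inner ℝ (X i ω) (X i ω) ∂P := by
        simp_rw [real_inner_self_eq_norm_sq]
    _ ≤ ∑ i, ∑ j, ∫ ω, inner ℝ (X i ω) (X j ω) ∂P :=
        sum_le_sum fun i _ => single_le_sum (fun j _ => (hinner i j).2) (mem_univ i)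
    _ = ∫ ω, ‖∑ i, X i ω‖ ^ 2 ∂P := by
        simp_rw [hexpand]
        rw [integral_finsetSum _ fun i _ => integrable_finsetSum _ fun j _ => (hinner i j).1]
        exact sum_congr rfl fun i _ =>
          (integral_finsetSum _ fun j _ => (hinner i j).1).symm

theorem sum_integral_norm_inv_card_smul_sum_sub_sq_le [IsFiniteMeasure P] {ι : Type*}
    [Fintype ι] {X : ι → Ω → E} {m : E} (hX : ∀ i, MemLp (X i) 2 P)
    (hindep : Pairwise fun i j => IndepFun (X i) (X j) P) (hmean : ∀ i, ∫ ω, X i ω ∂P = m) :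
    ∑ k, ∫ ω, ‖(Fintype.card ι : ℝ)⁻¹ • ∑ j, X j ω - X k ω‖ ^ 2 ∂P
      ≤ (1 - (Fintype.card ι : ℝ)⁻¹) * ∑ k, ∫ ω, ‖X k ω‖ ^ 2 ∂P := by
  have hsq k : Integrable (fun ω => ‖X k ω‖ ^ 2) P := (hX k).integrable_norm_pow two_ne_zero
  have hS : MemLp (fun ω => ∑ j, X j ω) 2 P := memLp_finsetSum univ fun j _ => hX j
  have hSsq : Integrable (fun ω => ‖∑ j, X j ω‖ ^ 2) P := hS.integrable_norm_pow two_ne_zero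
  have hdev k : Integrable (fun ω => ‖(Fintype.card ι : ℝ)⁻¹ • ∑ j, X j ω - X k ω‖ ^ 2) P :=
    ((hS.const_smul _).sub (hX k)).integrable_norm_pow two_ne_zero
  rw [← integral_finsetSum _ fun k _ => hdev k]
  simp_rw [sum_norm_inv_card_smul_sum_sub_sq]
  rw [integral_sub (integrable_finsetSum _ fun k _ => hsq k) (hSsq.const_mul _),
    integral_finsetSum _ fun k _ => hsq k, integral_const_mul]
  have := mul_le_mul_of_nonneg_left
    (sum_integral_norm_sq_le_integral_norm_sum_sq hX hindep hmean)
    (by positivity : (0 : ℝ) ≤ (Fintype.card ι : ℝ)⁻¹)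
  linarith

theorem inv_card_mul_sum_integral_norm_inv_card_smul_sum_sub_sq_le [IsFiniteMeasure P]
    {ι : Type*} [Fintype ι] {X : ι → Ω → E} {m : E} {C : ℝ} (hX : ∀ i, MemLp (X i) 2 P)
    (hindep : Pairwise fun i j => IndepFun (X i) (X j) P) (hmean : ∀ i, ∫ ω, X i ω ∂P = m)
    (hC : ∀ i, ∫ ω, ‖X i ω‖ ^ 2 ∂P ≤ C) :
    (Fintype.card ι : ℝ)⁻¹ * ∑ k, ∫ ω, ‖(Fintype.card ι : ℝ)⁻¹ • ∑ j, X j ω - X k ω‖ ^ 2 ∂P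
      ≤ ((Fintype.card ι : ℝ) - 1) / Fintype.card ι * C := by
  set n : ℝ := (Fintype.card ι : ℝ)
  have hn : n⁻¹ ≤ 1 := Nat.cast_inv_le_one _
  calc n⁻¹ * ∑ k, ∫ ω, ‖n⁻¹ • ∑ j, X j ω - X k ω‖ ^ 2 ∂P
      ≤ n⁻¹ * ((1 - n⁻¹) * ∑ k, ∫ ω, ‖X k ω‖ ^ 2 ∂P) := by
        gcongr
        exact sum_integral_norm_inv_card_smul_sum_sub_sq_le hX hindep hmean
    _ ≤ n⁻¹ * ((1 - n⁻¹) * (n * C)) := by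
        gcongr
        simpa using sum_le_card_nsmul univ _ _ fun i _ => hC i
    _ = (n - 1) / n * C := by
        rcases eq_or_ne n 0 with hn0 | hn0
        · simp [hn0]
        · field_simp

end Deviation

theorem local_error_deviation_bound_general
    {Ω : Type*} [MeasurableSpace Ω] (P : Measure Ω) [IsProbabilityMeasure P]
    {d K : ℕ}
    (μ M σ δ ηmax : ℝ) (hμ0 : 0 ≤ μ) (hμ1 : μ < 1)
    (hδ1 : δ < 1)
    (Co : EuclideanSpace ℝ (Fin d) → EuclideanSpace ℝ (Fin d))
    (hCo : ∀ v, ‖Co v - v‖ ^ 2 ≤ (1 - δ) * ‖v‖ ^ 2)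
    (η : ℕ → ℝ) (hη0 : ∀ t, 0 < η t) (hηmax : ∀ t, η t ≤ ηmax)
    (g m e : Fin K → ℕ → Ω → EuclideanSpace ℝ (Fin d))
    (hgL2 : ∀ k t, MemLp (g k t) 2 P)
    (hgbound : ∀ k t, ∫ ω, ‖g k t ω‖ ^ 2 ∂P ≤ M ^ 2 + σ ^ 2)
    (hm0 : ∀ k ω, m k 0 ω = 0) (he0 : ∀ k ω, e k 0 ω = 0)
    (hm : ∀ k t ω, m k (t + 1) ω = μ • m k t ω + g k t ω)
    (Δ : Fin K → ℕ → Ω → EuclideanSpace ℝ (Fin d))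
    (hΔ : ∀ k t ω, Δ k (t + 1) ω = e k t ω + η t • m k (t + 1) ω)
    (he : ∀ k t ω, e k (t + 1) ω = Δ k (t + 1) ω - Co (Δ k (t + 1) ω))
    -- for each fixed `t`, the local errors `e^1_t, …, e^K_t` are independent
    -- with a common mean
    (hemeas : ∀ k t, Measurable (e k t))
    (heindep : ∀ t, iIndepFun (fun k => e k t) P)
    (hemean : ∀ t, ∃ mbar : EuclideanSpace ℝ (Fin d), ∀ k, ∫ ω, e k t ω ∂P = mbar) :
    ∀ β₁ : ℝ, 0 < β₁ → β₁ < δ / (1 - δ) → ∀ t,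
      (K : ℝ)⁻¹ * ∑ k, ∫ ω, ‖(K : ℝ)⁻¹ • (∑ j, e j t ω) - e k t ω‖ ^ 2 ∂P
        ≤ (((K : ℝ) - 1) / (K : ℝ))
            * ((1 - δ) * (1 + 1 / β₁) / (1 - (1 - δ) * (1 + β₁)))
            * (ηmax ^ 2 * (M ^ 2 + σ ^ 2) / (1 - μ) ^ 2) := by
  intro β₁ hβ₁ hβ₁δ t
  have hδ : 0 ≤ 1 - δ := by linarith
  have hρ : (1 - δ) * (1 + β₁) < 1 := by
    rw [lt_div_iff₀ (by linarith)] at hβ₁δ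
    linarith
  have hcontr k s ω : ‖e k (s + 1) ω‖ ^ 2 ≤ (1 - δ) * ‖e k s ω + η s • m k (s + 1) ω‖ ^ 2 := by
    rw [he, norm_sub_rev, ← hΔ]
    exact hCo _
  have hmL2 k := memLp_momentum (hgL2 k) (hm0 k) (hm k)
  have heL2 k := memLp_errorFeedback
    ((le_mul_of_one_le_right hδ (by linarith)).trans hρ.le) (hmL2 k)
    (fun s => (hemeas k s).aestronglyMeasurable) (he0 k) (hcontr k)
  have hmB k s := integral_norm_sq_momentum_le hμ0 hμ1 (hgL2 k) (hgbound k) (hm0 k) (hm k) (s + 1)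
  have heB k := integral_norm_sq_errorFeedback_le hδ hβ₁ hρ
    (fun s => pow_le_pow_left₀ (hη0 s).le (hηmax s) 2) (hmL2 k) (hmB k) (heL2 k) (he0 k)
    (hcontr k) t
  obtain ⟨mbar, hmbar⟩ := hemean t
  have hdev := inv_card_mul_sum_integral_norm_inv_card_smul_sum_sub_sq_le (fun k => heL2 k t)
    (fun i j hij => (heindep t).indepFun hij) hmbar heB
  rw [Fintype.card_fin] at hdev
  convert hdev using 1
  ring

/-- Bound on the average squared deviation of the local compression errors of
SAEF-SGD with momentum from their empirical mean: for every `β₁ ∈ (0, δ/(1−δ))`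
and every `t`, `(1/K)Σ_k E‖(1/K)Σ_j e^j_t − e^k_t‖²
  ≤ ((K−1)/K)·[(1−δ)(1+1/β₁)/(1−(1−δ)(1+β₁))]·η_max²(M²+σ²)/(1−μ)²`. -/
theorem local_error_deviation_bound
    {Ω : Type*} [MeasurableSpace Ω] (P : Measure Ω) [IsProbabilityMeasure P]
    {d K : ℕ} (hK : 1 ≤ K)
    (μ M σ δ ηmax : ℝ) (hμ0 : 0 ≤ μ) (hμ1 : μ < 1)
    (hM : 0 ≤ M) (hσ : 0 ≤ σ) (hδ0 : 0 < δ) (hδ1 : δ < 1)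
    (Co : EuclideanSpace ℝ (Fin d) → EuclideanSpace ℝ (Fin d))
    (hCo : ∀ v, ‖Co v - v‖ ^ 2 ≤ (1 - δ) * ‖v‖ ^ 2)
    (η : ℕ → ℝ) (hη0 : ∀ t, 0 < η t) (hηmax : ∀ t, η t ≤ ηmax)
    (g m e : Fin K → ℕ → Ω → EuclideanSpace ℝ (Fin d))
    (hgL2 : ∀ k t, MemLp (g k t) 2 P)
    (hgbound : ∀ k t, ∫ ω, ‖g k t ω‖ ^ 2 ∂P ≤ M ^ 2 + σ ^ 2)
    (hm0 : ∀ k ω, m k 0 ω = 0) (he0 : ∀ k ω, e k 0 ω = 0)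
    (hm : ∀ k t ω, m k (t + 1) ω = μ • m k t ω + g k t ω)
    (Δ : Fin K → ℕ → Ω → EuclideanSpace ℝ (Fin d))
    (hΔ : ∀ k t ω, Δ k (t + 1) ω = e k t ω + η t • m k (t + 1) ω)
    (he : ∀ k t ω, e k (t + 1) ω = Δ k (t + 1) ω - Co (Δ k (t + 1) ω))
    -- for each fixed `t`, the local errors `e^1_t, …, e^K_t` are independent
    -- with a common mean
    (hemeas : ∀ k t, Measurable (e k t))
    (heindep : ∀ t, iIndepFun (fun k => e k t) P)
    (hemean : ∀ t, ∃ mbar : EuclideanSpace ℝ (Fin d), ∀ k, ∫ ω, e k t ω ∂P = mbar) :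
    ∀ β₁ : ℝ, 0 < β₁ → β₁ < δ / (1 - δ) → ∀ t,
      (K : ℝ)⁻¹ * ∑ k, ∫ ω, ‖(K : ℝ)⁻¹ • (∑ j, e j t ω) - e k t ω‖ ^ 2 ∂P
        ≤ (((K : ℝ) - 1) / (K : ℝ))
            * ((1 - δ) * (1 + 1 / β₁) / (1 - (1 - δ) * (1 + β₁)))
            * (ηmax ^ 2 * (M ^ 2 + σ ^ 2) / (1 - μ) ^ 2) :=
  local_error_deviation_bound_general P μ M σ δ ηmax hμ0 hμ1 hδ1 Co hCo η hη0 hηmax g m e hgL2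
    hgbound hm0 he0 hm Δ hΔ he hemeas heindep hemean
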